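/- For all partitions λ, μ, ν and every natural number r, one has c_{λ, μ+(1^r)}^{ν+(1^r)} ≥ c_{λμ}^{ν}, where ρ+(1^r) denotes adding 1 to each of the first r parts of ρ (allowing trailing zero parts). -/

import Mathlib

open scoped Classical

/-- The cells of the skew shape `nu / lam`. -/
def skewCells (lam nu : YoungDiagram) : Finset (ℕ × ℕ) := nu.cells \ lam.cells

/-- `d` is read before (or at) `c` in the reverse reading word: rows are read from
top to bottom, and each row from right to left. -/
def readsBefore (d c : ℕ × ℕ) : Prop := d.1 < c.1 ∨ (d.1 = c.1 ∧ c.2 ≤ d.2)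

/-- `T` is a Littlewood–Richardson skew tableau of shape `nu / lam` and content `mu`:
entries are positive exactly on the cells of `nu / lam`, rows weakly increase,
columns strictly increase, the number of entries equal to `k + 1` is the `k`-th part
of `mu`, and every prefix of the reverse reading word contains at least as many
entries `k + 1` as entries `k + 2` (the lattice word condition). -/
def IsLRFilling (lam mu nu : YoungDiagram) (T : ℕ × ℕ → ℕ) : Prop :=
  (∀ c : ℕ × ℕ, c ∈ skewCells lam nu ↔ T c ≠ 0) ∧
  (∀ i j : ℕ, (i, j) ∈ skewCells lam nu → (i, j + 1) ∈ skewCells lam nu →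
      T (i, j) ≤ T (i, j + 1)) ∧
  (∀ i j : ℕ, (i, j) ∈ skewCells lam nu → (i + 1, j) ∈ skewCells lam nu →
      T (i, j) < T (i + 1, j)) ∧
  (∀ k : ℕ, ((skewCells lam nu).filter fun c => T c = k + 1).card = mu.rowLen k) ∧
  (∀ c ∈ skewCells lam nu, ∀ k : ℕ,
      ((skewCells lam nu).filter fun d => readsBefore d c ∧ T d = k + 2).card ≤
      ((skewCells lam nu).filter fun d => readsBefore d c ∧ T d = k + 1).card)

/-- The Littlewood–Richardson coefficient `c_{lam,mu}^{nu}`, defined by the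
Littlewood–Richardson rule as the number of Littlewood–Richardson skew tableaux of
shape `nu / lam` and content `mu`. -/
noncomputable def lrCoeff (lam mu nu : YoungDiagram) : ℕ :=
  if lam ≤ nu then Nat.card { T : ℕ × ℕ → ℕ // IsLRFilling lam mu nu T } else 0

/-! Fill the new cell at the end of row `i` (for `i < r`) with `i + 1`. Entries of an LR
tableau in row `i` are at most `i + 1`, so rows and columns stay monotone; the new cell of
row `i` is read before every old cell of that row and after all of row `i - 1`, so an
entry `k + 2` added to a prefix of the reading word always comes with an earlier added
entry `k + 1`. Old cells are untouched, so the map is injective. -/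

theorem YoungDiagram.le_iff_rowLen_le {μ ν : YoungDiagram} :
    μ ≤ ν ↔ ∀ i, μ.rowLen i ≤ ν.rowLen i := by
  refine ⟨fun h i => ?_, fun h => ?_⟩
  · by_contra! hlt
    have : (i, ν.rowLen i) ∈ μ := YoungDiagram.mem_iff_lt_rowLen.2 hlt
    exact (YoungDiagram.mem_iff_lt_rowLen.1 (YoungDiagram.cells_subset_iff.2 h this)).false
  · rw [← YoungDiagram.cells_subset_iff]
    rintro ⟨i, j⟩ hc
    rw [YoungDiagram.mem_cells, YoungDiagram.mem_iff_lt_rowLen] at hc ⊢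
    exact hc.trans_le (h i)

lemma mem_skewCells {lam nu : YoungDiagram} {c : ℕ × ℕ} :
    c ∈ skewCells lam nu ↔ lam.rowLen c.1 ≤ c.2 ∧ c.2 < nu.rowLen c.1 := by
  obtain ⟨i, j⟩ := c
  simp [skewCells, YoungDiagram.mem_iff_lt_rowLen, and_comm]

lemma readsBefore_refl (c : ℕ × ℕ) : readsBefore c c := Or.inr ⟨rfl, le_rfl⟩

lemma readsBefore_trans {a b c : ℕ × ℕ} (hab : readsBefore a b) (hbc : readsBefore b c) :
    readsBefore a c := by
  unfold readsBefore at *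
  omega

lemma readsBefore_iff_toLex_le {d c : ℕ × ℕ} :
    readsBefore d c ↔
      toLex (d.1, OrderDual.toDual d.2) ≤ toLex (c.1, OrderDual.toDual c.2) := by
  rw [Prod.Lex.le_iff]
  rfl

namespace IsLRFilling

variable {lam mu nu : YoungDiagram} {T : ℕ × ℕ → ℕ}

lemma eq_zero_of_notMem (hT : IsLRFilling lam mu nu T) {c : ℕ × ℕ}
    (hc : c ∉ skewCells lam nu) : T c = 0 :=
  not_not.1 fun h => hc ((hT.1 c).2 h)

lemma ext_of_eqOn {T' : ℕ × ℕ → ℕ} (hT : IsLRFilling lam mu nu T)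
    (hT' : IsLRFilling lam mu nu T') (h : ∀ c ∈ skewCells lam nu, T c = T' c) : T = T' := by
  funext c
  by_cases hc : c ∈ skewCells lam nu
  · exact h c hc
  · rw [hT.eq_zero_of_notMem hc, hT'.eq_zero_of_notMem hc]

lemma row_mono (hT : IsLRFilling lam mu nu T) {i j j' : ℕ} (hj : j ≤ j')
    (hc : (i, j) ∈ skewCells lam nu) (hc' : (i, j') ∈ skewCells lam nu) :
    T (i, j) ≤ T (i, j') := by
  induction j', hj using Nat.le_induction with
  | base => exact le_rfl
  | succ n hn ih =>
    have hmid : (i, n) ∈ skewCells lam nu := by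
      rw [mem_skewCells] at hc hc' ⊢
      exact ⟨hc.1.trans hn, n.lt_succ_self.trans hc'.2⟩
    exact (ih hmid).trans (hT.2.1 i n hmid hc')

/-- The prefix before `c` is the prefix before the last cell read before `c`. -/
lemma lattice (hT : IsLRFilling lam mu nu T) (c : ℕ × ℕ) (k : ℕ) :
    ((skewCells lam nu).filter fun d => readsBefore d c ∧ T d = k + 2).card ≤
      ((skewCells lam nu).filter fun d => readsBefore d c ∧ T d = k + 1).card := by
  set S := (skewCells lam nu).filter fun d => readsBefore d c
  rcases S.eq_empty_or_nonempty with hS | hS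
  · refine (Finset.card_eq_zero.2 (Finset.filter_eq_empty_iff.2 fun d hd h => ?_)).trans_le
      (Nat.zero_le _)
    exact Finset.notMem_empty d (hS ▸ Finset.mem_filter.2 ⟨hd, h.1⟩)
  obtain ⟨d₀, hd₀, hmax⟩ :=
    S.exists_max_image (fun d => toLex (d.1, OrderDual.toDual d.2)) hS
  obtain ⟨hd₀, hd₀c⟩ := Finset.mem_filter.1 hd₀
  have hprefix (v : ℕ) : ((skewCells lam nu).filter fun d => readsBefore d c ∧ T d = v) =
      (skewCells lam nu).filter fun d => readsBefore d d₀ ∧ T d = v := by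
    refine Finset.filter_congr fun d hd => ⟨fun ⟨hdc, hv⟩ => ⟨?_, hv⟩,
      fun ⟨hdd₀, hv⟩ => ⟨readsBefore_trans hdd₀ hd₀c, hv⟩⟩
    exact readsBefore_iff_toLex_le.2 (hmax d (Finset.mem_filter.2 ⟨hd, hdc⟩))
  rw [hprefix, hprefix]
  exact hT.2.2.2.2 d₀ hd₀ k

/-- An entry `k + 2` needs an entry `k + 1` read before it, hence in a higher row. -/
lemma le_add_one (hT : IsLRFilling lam mu nu T) {i j : ℕ} (hc : (i, j) ∈ skewCells lam nu) :
    T (i, j) ≤ i + 1 := by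
  induction i using Nat.strong_induction_on generalizing j with
  | _ i ih =>
  by_contra! hlt
  obtain ⟨k, hk⟩ : ∃ k, T (i, j) = k + 2 := ⟨T (i, j) - 2, by omega⟩
  have hpos : 0 < ((skewCells lam nu).filter
      fun d => readsBefore d (i, j) ∧ T d = k + 2).card :=
    Finset.card_pos.2 ⟨_, Finset.mem_filter.2 ⟨hc, readsBefore_refl _, hk⟩⟩
  obtain ⟨⟨i', j'⟩, hd⟩ := Finset.card_pos.1 (hpos.trans_le (hT.lattice (i, j) k))
  obtain ⟨hmem, hread, hv⟩ := Finset.mem_filter.1 hd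
  have hi' : i' < i := by
    rcases hread with hi' | ⟨hi', hj⟩
    · exact hi'
    · dsimp only at hi' hj
      subst hi'
      have := hT.row_mono hj hc hmem
      omega
  have := ih i' hi' hmem
  omega

end IsLRFilling

lemma finite_isLRFilling (lam mu nu : YoungDiagram) :
    Finite {T : ℕ × ℕ → ℕ // IsLRFilling lam mu nu T} := by
  have hbound (T : {T // IsLRFilling lam mu nu T}) (c : skewCells lam nu) :
      T.1 c < nu.colLen 0 + 1 := by
    obtain ⟨⟨i, j⟩, hc⟩ := c
    show T.1 (i, j) < _
    have hi : i < nu.colLen j :=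
      YoungDiagram.mem_iff_lt_colLen.1 (YoungDiagram.mem_iff_lt_rowLen.2 (mem_skewCells.1 hc).2)
    have := T.2.le_add_one hc
    have := nu.colLen_anti 0 j j.zero_le
    omega
  refine Finite.of_injective
    (fun T (c : skewCells lam nu) => (⟨T.1 c, hbound T c⟩ : Fin (nu.colLen 0 + 1))) ?_
  rintro ⟨T, hT⟩ ⟨T', hT'⟩ h
  exact Subtype.ext <| hT.ext_of_eqOn hT' fun c hc => congrArg Fin.val (congrFun h ⟨c, hc⟩)

/-- The cells `(i, nu.rowLen i)`, `i < r`, added to `nu` by `nu + (1^r)`. -/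
def newCells (nu : YoungDiagram) (r : ℕ) : Finset (ℕ × ℕ) :=
  (Finset.range r).image fun i => (i, nu.rowLen i)

lemma mem_newCells {nu : YoungDiagram} {r : ℕ} {c : ℕ × ℕ} :
    c ∈ newCells nu r ↔ c.1 < r ∧ c.2 = nu.rowLen c.1 := by
  obtain ⟨i, j⟩ := c
  simp only [newCells, Finset.mem_image, Finset.mem_range, Prod.mk.injEq]
  constructor
  · rintro ⟨i, hi, rfl, rfl⟩
    exact ⟨hi, rfl⟩
  · rintro ⟨hi, rfl⟩
    exact ⟨i, hi, rfl, rfl⟩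

def addColumn (nu : YoungDiagram) (r : ℕ) (T : ℕ × ℕ → ℕ) (c : ℕ × ℕ) : ℕ :=
  if c.1 < r ∧ c.2 = nu.rowLen c.1 then c.1 + 1 else T c

section AddColumn

variable {lam mu nu mu' nu' : YoungDiagram} {r : ℕ} {T : ℕ × ℕ → ℕ}

lemma addColumn_of_mem_newCells {c : ℕ × ℕ} (hc : c ∈ newCells nu r) :
    addColumn nu r T c = c.1 + 1 :=
  if_pos (mem_newCells.1 hc)

lemma addColumn_of_mem_skewCells {c : ℕ × ℕ} (hc : c ∈ skewCells lam nu) :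
    addColumn nu r T c = T c :=
  if_neg fun h => (mem_skewCells.1 hc).2.ne h.2

lemma disjoint_skewCells_newCells : Disjoint (skewCells lam nu) (newCells nu r) :=
  Finset.disjoint_left.2 fun _ hc hnew => (mem_skewCells.1 hc).2.ne (mem_newCells.1 hnew).2

lemma skewCells_eq_union_newCells (hle : lam ≤ nu)
    (hnu : ∀ i, nu'.rowLen i = nu.rowLen i + if i < r then 1 else 0) :
    skewCells lam nu' = skewCells lam nu ∪ newCells nu r := by
  ext c
  rw [Finset.mem_union, mem_skewCells, mem_skewCells, mem_newCells, hnu]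
  have := YoungDiagram.le_iff_rowLen_le.1 hle c.1
  split_ifs <;> omega

lemma filter_newCells_addColumn (p : ℕ × ℕ → Prop) (m : ℕ) :
    ((newCells nu r).filter fun d => p d ∧ addColumn nu r T d = m + 1) =
      if m < r ∧ p (m, nu.rowLen m) then {(m, nu.rowLen m)} else ∅ := by
  ext d
  rw [Finset.mem_filter]
  constructor
  · rintro ⟨hd, hp, hv⟩
    rw [addColumn_of_mem_newCells hd, add_left_inj] at hv
    obtain ⟨hi, hj⟩ := mem_newCells.1 hd
    rw [if_pos (by subst hv; exact ⟨hi, hj ▸ hp⟩), Finset.mem_singleton, Prod.ext_iff]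
    exact ⟨hv, hv ▸ hj⟩
  · split_ifs with hm
    · intro hd
      rw [Finset.mem_singleton.1 hd]
      have hnew : (m, nu.rowLen m) ∈ newCells nu r := mem_newCells.2 ⟨hm.1, rfl⟩
      exact ⟨hnew, hm.2, addColumn_of_mem_newCells hnew⟩
    · simp

lemma card_filter_addColumn (hle : lam ≤ nu)
    (hnu : ∀ i, nu'.rowLen i = nu.rowLen i + if i < r then 1 else 0)
    (p : ℕ × ℕ → Prop) (m : ℕ) :
    ((skewCells lam nu').filter fun d => p d ∧ addColumn nu r T d = m + 1).card =
      ((skewCells lam nu).filter fun d => p d ∧ T d = m + 1).card +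
        if m < r ∧ p (m, nu.rowLen m) then 1 else 0 := by
  rw [skewCells_eq_union_newCells hle hnu, Finset.filter_union,
    Finset.card_union_of_disjoint (Finset.disjoint_filter_filter disjoint_skewCells_newCells),
    filter_newCells_addColumn]
  congr 1
  · exact congrArg Finset.card <| Finset.filter_congr fun d hd => by
      rw [addColumn_of_mem_skewCells hd]
  · split_ifs <;> rfl

end AddColumn

namespace IsLRFilling

variable {lam mu nu mu' nu' : YoungDiagram} {r : ℕ} {T : ℕ × ℕ → ℕ}

lemma addColumn_le_addColumn_right (hT : IsLRFilling lam mu nu T) (hle : lam ≤ nu)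
    (hnu : ∀ i, nu'.rowLen i = nu.rowLen i + if i < r then 1 else 0) {i j : ℕ}
    (hc : (i, j) ∈ skewCells lam nu') (hc' : (i, j + 1) ∈ skewCells lam nu') :
    addColumn nu r T (i, j) ≤ addColumn nu r T (i, j + 1) := by
  rw [skewCells_eq_union_newCells hle hnu, Finset.mem_union] at hc hc'
  rcases hc with hc | hc
  · rw [addColumn_of_mem_skewCells hc]
    rcases hc' with hc' | hc'
    · rw [addColumn_of_mem_skewCells hc']
      exact hT.2.1 i j hc hc'
    · rw [addColumn_of_mem_newCells hc']
      exact hT.le_add_one hc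
  · exfalso
    rw [mem_newCells] at hc
    rw [mem_skewCells, mem_newCells] at hc'
    dsimp only at hc hc'
    omega

lemma addColumn_lt_addColumn_down (hT : IsLRFilling lam mu nu T) (hle : lam ≤ nu)
    (hnu : ∀ i, nu'.rowLen i = nu.rowLen i + if i < r then 1 else 0) {i j : ℕ}
    (hc : (i, j) ∈ skewCells lam nu') (hc' : (i + 1, j) ∈ skewCells lam nu') :
    addColumn nu r T (i, j) < addColumn nu r T (i + 1, j) := by
  rw [skewCells_eq_union_newCells hle hnu, Finset.mem_union] at hc hc'
  rcases hc with hc | hc <;> rcases hc' with hc' | hc'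
  · rw [addColumn_of_mem_skewCells hc, addColumn_of_mem_skewCells hc']
    exact hT.2.2.1 i j hc hc'
  · rw [addColumn_of_mem_skewCells hc, addColumn_of_mem_newCells hc']
    exact Nat.lt_succ_of_le (hT.le_add_one hc)
  · exfalso
    rw [mem_newCells] at hc
    rw [mem_skewCells] at hc'
    have := nu.rowLen_anti i (i + 1) i.le_succ
    dsimp only at hc hc'
    omega
  · rw [addColumn_of_mem_newCells hc, addColumn_of_mem_newCells hc']
    exact Nat.lt_succ_self _

theorem addColumn (hT : IsLRFilling lam mu nu T) (hle : lam ≤ nu)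
    (hmu : ∀ i, mu'.rowLen i = mu.rowLen i + if i < r then 1 else 0)
    (hnu : ∀ i, nu'.rowLen i = nu.rowLen i + if i < r then 1 else 0) :
    IsLRFilling lam mu' nu' (addColumn nu r T) := by
  refine ⟨fun c => ?_, fun i j => hT.addColumn_le_addColumn_right hle hnu,
    fun i j => hT.addColumn_lt_addColumn_down hle hnu, fun k => ?_, fun c _ k => ?_⟩
  · rw [skewCells_eq_union_newCells hle hnu, Finset.mem_union]
    by_cases hnew : c ∈ newCells nu r
    · simp [hnew, addColumn_of_mem_newCells hnew]
    · rw [_root_.addColumn, if_neg (mt mem_newCells.2 hnew)]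
      simpa [hnew] using hT.1 c
  · have := card_filter_addColumn (T := T) hle hnu (fun _ => True) k
    simp only [true_and] at this
    rw [this, hT.2.2.2.1, hmu]
    simp
  · rw [card_filter_addColumn hle hnu (readsBefore · c),
      card_filter_addColumn hle hnu (readsBefore · c)]
    refine add_le_add (hT.lattice c k) ?_
    split_ifs with h₂ h₁ <;> try simp
    exact h₁ ⟨by omega, readsBefore_trans (Or.inl k.lt_succ_self) h₂.2⟩

end IsLRFilling

/-- For all partitions `lam`, `mu`, `nu` and every natural number `r`,
`c_{lam, mu+(1^r)}^{nu+(1^r)} ≥ c_{lam,mu}^{nu}`, where `ρ + (1^r)` denotes the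
partition obtained from `ρ` by adding `1` to each of the first `r` parts (treating
absent parts as `0`). -/
theorem lrCoeff_le_lrCoeff_add_column (lam mu nu mu' nu' : YoungDiagram) (r : ℕ)
    (hmu : ∀ i : ℕ, mu'.rowLen i = mu.rowLen i + (if i < r then 1 else 0))
    (hnu : ∀ i : ℕ, nu'.rowLen i = nu.rowLen i + (if i < r then 1 else 0)) :
    lrCoeff lam mu nu ≤ lrCoeff lam mu' nu' := by
  have hnu_le : nu ≤ nu' := YoungDiagram.le_iff_rowLen_le.2 fun i => hnu i ▸ le_self_add
  unfold lrCoeff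
  split_ifs with hle hle'
  · have := finite_isLRFilling lam mu' nu'
    refine Nat.card_le_card_of_injective
      (fun T => ⟨addColumn nu r T.1, T.2.addColumn hle hmu hnu⟩) fun T T' h => ?_
    refine Subtype.ext <| T.2.ext_of_eqOn T'.2 fun c hc => ?_
    simpa only [addColumn_of_mem_skewCells hc] using congrFun (congrArg Subtype.val h) c
  · exact absurd (hle.trans hnu_le) hle'
  · exact Nat.zero_le _
  · exact le_rfl
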